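/- arXiv:2209.04668 — 4 statements merged into one kernel-verified Lean document; each statement's English description precedes it below -/
import Mathlib

section
/- Let G be a connected finite simple graph with normalized Laplacian 𝓛, let τ be a real number, let a and b be vertices, and let γ be a complex number. If exp(i τ 𝓛) e_a = γ • e_b (where the exponential is the matrix exponential of the complex matrix i τ 𝓛 and e_a, e_b are standard basis vectors), then γ = 1. -/
open Matrix

/-- The normalized Laplacian `𝓛 = D^{-1/2}(D − A)D^{-1/2}` of a simple graph. -/
noncomputable def normLap {V : Type*} [Fintype V] [DecidableEq V]
    (G : SimpleGraph V) [DecidableRel G.Adj] : Matrix V V ℝ :=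
  Matrix.diagonal (fun v => (Real.sqrt (G.degree v))⁻¹) *
    (Matrix.diagonal (fun v => (G.degree v : ℝ)) - G.adjMatrix ℝ) *
    Matrix.diagonal (fun v => (Real.sqrt (G.degree v))⁻¹)

/-- The quantum walk transition matrix `U(t) = exp(i t 𝓛)`. -/
noncomputable def qwalk {V : Type*} [Fintype V] [DecidableEq V]
    (G : SimpleGraph V) [DecidableRel G.Adj] (t : ℝ) : Matrix V V ℂ :=
  NormedSpace.exp ((Complex.I * (t : ℂ)) • (normLap G).map Complex.ofReal)

/-- `θ` lies in the eigenvalue support of vertex `a` for the symmetric matrix `L`: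
some eigenvector of `L` for `θ` has nonzero entry at `a`. -/
def inSupport {V : Type*} [Fintype V] (L : Matrix V V ℝ) (a : V) (θ : ℝ) : Prop :=
  ∃ v : V → ℝ, v ≠ 0 ∧ L.mulVec v = θ • v ∧ v a ≠ 0

/-- Vertices `a` and `b` are strongly cospectral with respect to `L`. -/
def StronglyCospectral {V : Type*} [Fintype V] (L : Matrix V V ℝ) (a b : V) : Prop :=
  ∀ θ : ℝ, (∀ v : V → ℝ, L.mulVec v = θ • v → v a = v b) ∨
           (∀ v : V → ℝ, L.mulVec v = θ • v → v a = - v b)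

/-- `θ` is in the positive eigenvalue support `S⁺` of strongly cospectral vertices `a, b`. -/
def Splus {V : Type*} [Fintype V] (L : Matrix V V ℝ) (a b : V) (θ : ℝ) : Prop :=
  inSupport L a θ ∧ ∀ v : V → ℝ, L.mulVec v = θ • v → v a = v b

/-- `θ` is in the negative eigenvalue support `S⁻` of strongly cospectral vertices `a, b`. -/
def Sminus {V : Type*} [Fintype V] (L : Matrix V V ℝ) (a b : V) (θ : ℝ) : Prop :=
  inSupport L a θ ∧ ∀ v : V → ℝ, L.mulVec v = θ • v → v a = - v b

/-- Perfect state transfer from `a` to `b` at time `τ`. -/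
noncomputable def PST {V : Type*} [Fintype V] [DecidableEq V]
    (G : SimpleGraph V) [DecidableRel G.Adj] (a b : V) (τ : ℝ) : Prop :=
  ∃ γ : ℂ, ‖γ‖ = 1 ∧ (qwalk G τ).mulVec (Pi.single a 1) = γ • (Pi.single b 1 : V → ℂ)

/-- `m`: the lcm of the denominators of a finite set of rationals. -/
def mOf (T : Finset ℚ) : ℕ := T.lcm fun q => q.den

/-- `g`: the gcd of the integers `m·θ` for `θ ∈ T`. -/
def gOf (T : Finset ℚ) : ℤ := T.gcd fun q => ((mOf T : ℚ) * q).num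

/-!
Since `𝓛 (√d) = 0` for the vector of square roots of degrees, the quantum walk `U = exp(iτ𝓛)`
fixes `√d`. As `U` is symmetric, pairing `U e_a = γ e_b` with `√d` gives `√d_a = γ √d_b`, so `γ`
is a positive real; as `U` is unitary, `|γ| = 1`. Hence `γ = 1`. (A one-vertex graph has
`𝓛 = 0` and any positive vector plays the role of `√d`.)
-/

open NormedSpace

theorem NormedSpace.exp_mul_of_mul_eq_zero {𝔸 : Type*} [NormedRing 𝔸] [NormedAlgebra ℚ 𝔸]
    [CompleteSpace 𝔸] {x y : 𝔸} (h : x * y = 0) : exp x * y = y := by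
  have : SemiconjBy y 0 x := by simp [SemiconjBy, h]
  simpa using this.exp_right.eq.symm

namespace Matrix

variable {n : Type*} [Fintype n] [DecidableEq n]

section Exp

variable {𝔸 : Type*} [NormedRing 𝔸] [NormedAlgebra ℚ 𝔸] [CompleteSpace 𝔸]

-- matrices carry no global norm; any submultiplicative one, here the `ℓ∞` operator norm, will do
theorem exp_mul_of_mul_eq_zero {A W : Matrix n n 𝔸} (h : A * W = 0) : exp A * W = W :=
  @NormedSpace.exp_mul_of_mul_eq_zero _ Matrix.linftyOpNormedRing Matrix.linftyOpNormedAlgebra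
    (inferInstanceAs (CompleteSpace (n → n → 𝔸))) _ _ h

theorem exp_mulVec_of_mulVec_eq_zero {A : Matrix n n 𝔸} {w : n → 𝔸} (hw : A *ᵥ w = 0) :
    exp A *ᵥ w = w := by
  let W : Matrix n n 𝔸 := of fun i _ => w i
  have hW : A * W = 0 := by
    ext i j
    exact congrFun hw i
  have hcol : ∀ (M : Matrix n n 𝔸) i, (M * W) i i = (M *ᵥ w) i := fun _ _ => rfl
  ext i
  rw [← hcol, exp_mul_of_mul_eq_zero hW]
  rfl

theorem exp_mem_unitary_of_mem_skewAdjoint [StarRing 𝔸] [ContinuousStar 𝔸] {A : Matrix n n 𝔸}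
    (hA : A ∈ skewAdjoint (Matrix n n 𝔸)) : exp A ∈ unitary (Matrix n n 𝔸) := by
  rw [Unitary.mem_iff, star_eq_conjTranspose, ← exp_conjTranspose, ← star_eq_conjTranspose,
    skewAdjoint.mem_iff.mp hA, ← exp_add_of_commute _ _ (Commute.refl A).neg_left,
    ← exp_add_of_commute _ _ (Commute.refl A).neg_right, neg_add_cancel, add_neg_cancel, exp_zero,
    and_self]

end Exp

theorem norm_eq_one_of_mem_unitary_of_mulVec_single {𝕜 : Type*} [RCLike 𝕜] {U : Matrix n n 𝕜}
    (hU : U ∈ unitary (Matrix n n 𝕜)) {a b : n} {γ : 𝕜}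
    (h : U *ᵥ Pi.single a 1 = γ • Pi.single b 1) : ‖γ‖ = 1 := by
  have hcol : ∀ i, U i a = γ * (Pi.single b 1 : n → 𝕜) i := fun i => by
    simpa using congrFun h i
  have hdiag := congrFun (congrFun (mem_unitaryGroup_iff'.mp hU) a) a
  simp only [mul_apply, star_apply, hcol, Pi.single_apply, mul_ite, mul_one, mul_zero,
    RCLike.star_def, Finset.sum_ite_eq', Finset.mem_univ, ↓reduceIte, one_apply_eq] at hdiag
  rw [RCLike.conj_mul] at hdiag
  exact (pow_eq_one_iff_of_nonneg (norm_nonneg γ) two_ne_zero).mp (by exact_mod_cast hdiag)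

theorem IsSymm.apply_eq_mul_of_mulVec_single {α : Type*} [CommSemiring α] {U : Matrix n n α}
    (hU : U.IsSymm) {w : n → α} (hw : U *ᵥ w = w) {a b : n} {γ : α}
    (h : U *ᵥ Pi.single a 1 = γ • Pi.single b 1) : w a = γ * w b := by
  calc w a = (U *ᵥ w) a := by rw [hw]
    _ = w ⬝ᵥ (U *ᵥ Pi.single a 1) := by
        rw [dotProduct_mulVec, ← mulVec_transpose, hU.eq, dotProduct_single, mul_one]
    _ = γ * w b := by rw [h, dotProduct_smul, dotProduct_single, smul_eq_mul, mul_one]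

end Matrix

section NormalizedLaplacian

variable {V : Type*} [Fintype V] [DecidableEq V] (G : SimpleGraph V) [DecidableRel G.Adj]

theorem normLap_isSymm : (normLap G).IsSymm := by
  have hD : ∀ f : V → ℝ, (diagonal f).IsSymm := fun f => diagonal_transpose f
  have hM : (diagonal (fun v => (G.degree v : ℝ)) - G.adjMatrix ℝ).IsSymm :=
    (hD _).sub (G.isSymm_adjMatrix)
  rw [IsSymm, normLap, transpose_mul, transpose_mul, (hD _).eq, hM.eq, mul_assoc]

theorem normLap_mulVec_sqrt_degree (hdeg : ∀ v, 0 < G.degree v) :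
    normLap G *ᵥ (fun v => √(G.degree v : ℝ)) = 0 := by
  have hones : diagonal (fun v => (√(G.degree v : ℝ))⁻¹) *ᵥ (fun v => √(G.degree v : ℝ)) =
      fun _ => 1 := by
    ext v
    rw [mulVec_diagonal]
    exact inv_mul_cancel₀ (Real.sqrt_pos.2 (mod_cast hdeg v)).ne'
  have hrows : (diagonal (fun v => (G.degree v : ℝ)) - G.adjMatrix ℝ) *ᵥ (fun _ => 1) = 0 := by
    ext v
    simp [sub_mulVec, mulVec_diagonal]
  rw [normLap, ← mulVec_mulVec, ← mulVec_mulVec, hones, hrows, mulVec_zero]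

theorem exists_pos_normLap_mulVec_eq_zero (hG : G.Preconnected) :
    ∃ w : V → ℝ, (∀ v, 0 < w v) ∧ normLap G *ᵥ w = 0 := by
  rcases subsingleton_or_nontrivial V with hV | hV
  · -- every degree is `0`, so `normLap G = 0` because `(√0)⁻¹ = 0`
    exact ⟨1, fun _ => one_pos, by simp [normLap]⟩
  · have hdeg : ∀ v, 0 < G.degree v := fun v => hG.degree_pos_of_nontrivial v
    exact ⟨_, fun v => Real.sqrt_pos.2 (mod_cast hdeg v), normLap_mulVec_sqrt_degree G hdeg⟩

end NormalizedLaplacian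

section QuantumWalk

variable {V : Type*} [Fintype V] [DecidableEq V] (G : SimpleGraph V) [DecidableRel G.Adj]

theorem qwalk_isSymm (t : ℝ) : (qwalk G t).IsSymm :=
  (((normLap_isSymm G).map _).smul _).exp

theorem qwalk_mem_unitary (t : ℝ) : qwalk G t ∈ unitary (Matrix V V ℂ) := by
  have hL : IsSelfAdjoint ((normLap G).map Complex.ofReal) :=
    (isHermitian_map_iff (fun x => by simp) Complex.ofReal_injective).mpr
      (isHermitian_iff_isSymm.mpr (normLap_isSymm G))
  have hIt : Complex.I * t ∈ skewAdjoint ℂ := by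
    simp [skewAdjoint.mem_iff, Complex.conj_ofReal]
  exact exp_mem_unitary_of_mem_skewAdjoint (hL.smul_mem_skewAdjoint hIt)

theorem qwalk_mulVec_of_normLap_mulVec_eq_zero {w : V → ℝ} (hw : normLap G *ᵥ w = 0) (t : ℝ) :
    qwalk G t *ᵥ (Complex.ofReal ∘ w) = Complex.ofReal ∘ w := by
  refine exp_mulVec_of_mulVec_eq_zero ?_
  have hwℂ : (normLap G).map Complex.ofReal *ᵥ (Complex.ofReal ∘ w) = 0 := by
    ext v
    simpa [hw] using (RingHom.map_mulVec (algebraMap ℝ ℂ) (normLap G) w v).symm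
  rw [smul_mulVec, hwℂ, smul_zero]

end QuantumWalk

/-- for a connected graph, if `U(τ) e_a = γ • e_b` then `γ = 1`. -/
theorem pst_phase_eq_one {V : Type*} [Fintype V] [DecidableEq V]
    (G : SimpleGraph V) [DecidableRel G.Adj] (hG : G.Connected)
    (τ : ℝ) (a b : V) (γ : ℂ)
    (h : (qwalk G τ).mulVec (Pi.single a 1) = γ • (Pi.single b 1 : V → ℂ)) :
    γ = 1 := by
  obtain ⟨w, hw_pos, hw⟩ := exists_pos_normLap_mulVec_eq_zero G hG.preconnected
  have hphase : (w a : ℂ) = γ * w b :=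
    (qwalk_isSymm G τ).apply_eq_mul_of_mulVec_single
      (qwalk_mulVec_of_normLap_mulVec_eq_zero G hw τ) h
  have hnorm : ‖γ‖ = 1 := norm_eq_one_of_mem_unitary_of_mulVec_single (qwalk_mem_unitary G τ) h
  have hγ : γ = ((w a / w b : ℝ) : ℂ) := by
    rw [Complex.ofReal_div, hphase, mul_div_cancel_right₀ _ (mod_cast (hw_pos b).ne')]
  rw [hγ, Complex.norm_real, Real.norm_of_nonneg (div_pos (hw_pos a) (hw_pos b)).le] at hnorm
  rw [hγ, hnorm, Complex.ofReal_one]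
end

section
/- Let G be a finite simple graph with all degrees positive and normalized Laplacian 𝓛, let a be a vertex, and let θ be an eigenvalue of 𝓛 in the eigenvalue support of a. If θ' is a real number that is an algebraic conjugate of θ over ℚ (i.e., θ and θ' have the same minimal polynomial over ℚ), then θ' is also an eigenvalue of 𝓛 lying in the eigenvalue support of a. In other words, the eigenvalue support of any vertex is closed under taking algebraic conjugates. -/
/-!
Conjugating by `D^{1/2}` turns `𝓛` into the rational matrix `(D - A) D⁻¹` and rescales
eigenvectors entrywise by nonzero factors, so it does not change eigenvalue supports.
For a rational matrix `N` and an eigenvector `w` for `θ` with `w a ≠ 0`, a `ℚ(θ)`-linear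
functional `c : ℝ → ℚ(θ)` with `c (w a) ≠ 0` maps `w` to an eigenvector over `ℚ(θ)`;
applying the embedding `ℚ(θ) → ℝ` with `θ ↦ θ'` then gives an eigenvector for `θ'`
that is still nonzero at `a`.
-/

open Matrix

open Polynomial IntermediateField

namespace Matrix

variable {n : Type*} [Fintype n]

theorem mulVec_comp_linearMap {m R A : Type*} [CommSemiring R] [Semiring A] [Algebra R A]
    (N : Matrix m n R) (c : A →ₗ[R] R) (w : n → A) :
    N *ᵥ (c ∘ w) = c ∘ (N.map (algebraMap R A) *ᵥ w) := by
  ext i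
  simp [mulVec, dotProduct, ← Algebra.smul_def]

variable {K L : Type*} [Field K] [Field L] [Algebra K L]

theorem isIntegral_of_mulVec_eq_smul (N : Matrix n n K) {x : L} {w : n → L}
    (hw : w ≠ 0) (h : N.map (algebraMap K L) *ᵥ w = x • w) : IsIntegral K x := by
  classical
  refine ⟨N.charpoly, N.charpoly_monic, ?_⟩
  rw [eval₂_eq_eval_map, ← charpoly_map, eval_charpoly, ← exists_mulVec_eq_zero_iff]
  refine ⟨w, hw, ?_⟩
  rw [sub_mulVec, h, scalar_apply, diagonal_const_mulVec, sub_self]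

theorem exists_mulVec_eq_smul_of_minpoly_eq (N : Matrix n n K) {x y : L}
    (hxy : minpoly K x = minpoly K y) {w : n → L} (hw : N.map (algebraMap K L) *ᵥ w = x • w)
    {a : n} (ha : w a ≠ 0) :
    ∃ u : n → L, N.map (algebraMap K L) *ᵥ u = y • u ∧ u a ≠ 0 := by
  have hx : IsIntegral K x :=
    N.isIntegral_of_mulVec_eq_smul (fun h0 => ha (by simp [h0])) hw
  have hy : y ∈ (minpoly K x).aroots L :=
    mem_aroots.2 ⟨minpoly.ne_zero hx, hxy ▸ minpoly.aeval K y⟩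
  set σ : K⟮x⟯ →ₐ[K] L := (algHomAdjoinIntegralEquiv K hx).symm ⟨y, hy⟩
  have hσ : σ (AdjoinSimple.gen K x) = y := algHomAdjoinIntegralEquiv_symm_apply_gen K hx _
  obtain ⟨c, hc⟩ := Module.Projective.exists_dual_ne_zero K⟮x⟯ ha
  have hNσ : (N.map (algebraMap K K⟮x⟯)).map σ = N.map (algebraMap K L) := by
    ext i j
    exact σ.commutes (N i j)
  have hcw : N.map (algebraMap K K⟮x⟯) *ᵥ (c ∘ w) = AdjoinSimple.gen K x • (c ∘ w) := by
    rw [mulVec_comp_linearMap, map_map, ← RingHom.coe_comp, ← IsScalarTower.algebraMap_eq, hw]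
    funext i
    exact c.map_smul (AdjoinSimple.gen K x) (w i)
  refine ⟨σ ∘ c ∘ w, ?_, by simpa using hc⟩
  funext i
  rw [← hNσ]
  simpa [hcw, hσ] using
    (RingHom.map_mulVec (σ : K⟮x⟯ →+* L) (N.map (algebraMap K K⟮x⟯)) (c ∘ w) i).symm

end Matrix

section Support

variable {V : Type*} [Fintype V]

theorem inSupport_iff {M : Matrix V V ℝ} {a : V} {θ : ℝ} :
    inSupport M a θ ↔ ∃ v : V → ℝ, M *ᵥ v = θ • v ∧ v a ≠ 0 :=
  ⟨fun ⟨v, _, hv, ha⟩ => ⟨v, hv, ha⟩, fun ⟨v, hv, ha⟩ => ⟨v, fun h => ha (by simp [h]), hv, ha⟩⟩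

theorem inSupport_map_of_minpoly_eq (N : Matrix V V ℚ) {a : V}
    {θ θ' : ℝ} (hθ : inSupport (N.map (algebraMap ℚ ℝ)) a θ)
    (hconj : minpoly ℚ θ = minpoly ℚ θ') :
    inSupport (N.map (algebraMap ℚ ℝ)) a θ' := by
  obtain ⟨w, hw, ha⟩ := inSupport_iff.1 hθ
  exact inSupport_iff.2 (N.exists_mulVec_eq_smul_of_minpoly_eq hconj hw ha)

variable [DecidableEq V]

theorem inSupport.diagonal_conj {M : Matrix V V ℝ} {a : V} {θ : ℝ} (h : inSupport M a θ)
    {s : V → ℝ} (hs : ∀ v, s v ≠ 0) :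
    inSupport (diagonal (fun v => (s v)⁻¹) * M * diagonal s) a θ := by
  obtain ⟨u, hu, ha⟩ := inSupport_iff.1 h
  refine inSupport_iff.2
    ⟨diagonal (fun v => (s v)⁻¹) *ᵥ u, ?_, by simp [mulVec_diagonal, hs a, ha]⟩
  have hss : diagonal s * diagonal (fun v => (s v)⁻¹) = 1 := by
    simp [diagonal_mul_diagonal, hs]
  rw [← mulVec_mulVec, ← mulVec_mulVec, mulVec_mulVec u (diagonal s), hss, one_mulVec, hu,
    mulVec_smul]

theorem inSupport_diagonal_conj_iff {M : Matrix V V ℝ} {a : V} {θ : ℝ}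
    {s : V → ℝ} (hs : ∀ v, s v ≠ 0) :
    inSupport (diagonal (fun v => (s v)⁻¹) * M * diagonal s) a θ ↔ inSupport M a θ := by
  refine ⟨fun h => ?_, fun h => h.diagonal_conj hs⟩
  have hs' : ∀ v, (s v)⁻¹ ≠ 0 := fun v => inv_ne_zero (hs v)
  have hM : diagonal s * (diagonal (fun v => (s v)⁻¹) * M * diagonal s) *
      diagonal (fun v => (s v)⁻¹) = M := by
    simp [← Matrix.mul_assoc, diagonal_mul_diagonal, hs, Matrix.mul_assoc M]
  simpa only [inv_inv, hM] using h.diagonal_conj hs'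

end Support

theorem SimpleGraph.lapMatrix_map {V : Type*} [Fintype V] [DecidableEq V]
    (G : SimpleGraph V) [DecidableRel G.Adj] {R S : Type*} [Ring R] [Ring S] (f : R →+* S) :
    (G.lapMatrix R).map f = G.lapMatrix S := by
  ext i j
  simp only [SimpleGraph.lapMatrix, SimpleGraph.degMatrix, map_apply, Matrix.sub_apply,
    SimpleGraph.adjMatrix_apply, diagonal_apply]
  split_ifs <;> simp

theorem normLap_eq_diagonal_conj {V : Type*} [Fintype V] [DecidableEq V]
    (G : SimpleGraph V) [DecidableRel G.Adj] :
    normLap G = diagonal (fun v => (Real.sqrt (G.degree v))⁻¹) *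
      (G.lapMatrix ℚ * diagonal (fun v => (G.degree v : ℚ)⁻¹)).map (algebraMap ℚ ℝ) *
      diagonal (fun v => Real.sqrt (G.degree v)) := by
  rw [Matrix.map_mul, G.lapMatrix_map, diagonal_map (map_zero _),
    Matrix.mul_assoc _ (G.lapMatrix ℝ * _), Matrix.mul_assoc (G.lapMatrix ℝ),
    diagonal_mul_diagonal, ← Matrix.mul_assoc, normLap]
  congr 2
  funext v
  rw [eq_ratCast, Rat.cast_inv, Rat.cast_natCast, inv_mul_eq_div, Real.sqrt_div_self]

/-- the eigenvalue support of a vertex is closed under algebraic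
conjugation over `ℚ`. -/
theorem support_closed_under_conjugates {V : Type*} [Fintype V] [DecidableEq V]
    (G : SimpleGraph V) [DecidableRel G.Adj]
    (hdeg : ∀ v : V, 0 < G.degree v)
    (a : V) (θ θ' : ℝ)
    (hθ : inSupport (normLap G) a θ)
    (hconj : minpoly ℚ θ = minpoly ℚ θ') :
    inSupport (normLap G) a θ' := by
  have hs : ∀ v, Real.sqrt (G.degree v) ≠ 0 := fun v =>
    (Real.sqrt_pos.2 (Nat.cast_pos.2 (hdeg v))).ne'
  rw [normLap_eq_diagonal_conj, inSupport_diagonal_conj_iff hs] at hθ ⊢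
  exact inSupport_map_of_minpoly_eq _ hθ hconj
end

section
/- Let G be a finite tree (connected acyclic simple graph) on at least two vertices with combinatorial Laplacian L = D − A and degree matrix D. Let p ≥ 0 and q ≥ 1 be coprime integers, and let w : V → ℤ be an integer vector whose entries have greatest common divisor 1 and which satisfies q·(L w) = p·(D w) (entrywise, so w corresponds to an eigenvector of D^{-1}L with eigenvalue p/q). Then all entries of w are congruent to each other modulo p. -/
open Matrix

/-!
Each edge `uv` of a tree is a bridge; let `S` be the side of `u`. Summing the Laplacian over `S`
cancels every edge inside `S` and leaves only the edge `uv`, so `∑_{i ∈ S} (L w)_i = w u - w v`.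
Multiplying by `q` and using `q L w = p D w` gives `q (w u - w v) = p ∑_{i ∈ S} (D w)_i`, hence
`p ∣ w u - w v` because `p` and `q` are coprime. Connectedness spreads the congruence along paths.
-/

namespace SimpleGraph

open Finset

variable {V : Type*} {G : SimpleGraph V}

theorem Preconnected.modEq_of_forall_adj (hG : G.Preconnected) {n : ℤ} {f : V → ℤ}
    (h : ∀ u v, G.Adj u v → f u ≡ f v [ZMOD n]) (u v : V) : f u ≡ f v [ZMOD n] := by
  have := Relation.ReflTransGen.lift (p := Int.ModEq n) f h _ _
    ((reachable_iff_reflTransGen u v).1 (hG u v))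
  rwa [Function.onFun, Relation.reflTransGen_eq_self] at this

variable [DecidableRel G.Adj] {R : Type*} [NonAssocRing R]

theorem sum_sum_ite_adj_sub_eq_zero (S : Finset V) (x : V → R) :
    ∑ i ∈ S, ∑ j ∈ S, (if G.Adj i j then x i - x j else 0) = 0 := by
  have hswap : ∑ i ∈ S, ∑ j ∈ S with G.Adj i j, x j = ∑ i ∈ S, ∑ j ∈ S with G.Adj i j, x i := by
    simp only [sum_filter]
    rw [sum_comm]
    simp only [G.adj_comm]
  simp only [← sum_filter, sum_sub_distrib, hswap, sub_self]

variable [Fintype V] [DecidableEq V]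

theorem lapMatrix_mulVec_apply_eq_sum_adj (x : V → R) (i : V) :
    (G.lapMatrix R *ᵥ x) i = ∑ j, if G.Adj i j then x i - x j else 0 := by
  rw [lapMatrix_mulVec_apply, ← sum_filter, ← neighborFinset_eq_filter,
    sum_sub_distrib, sum_const, card_neighborFinset_eq_degree, nsmul_eq_mul]

theorem sum_lapMatrix_mulVec_eq_sum_boundary (S : Finset V) (x : V → R) :
    ∑ i ∈ S, (G.lapMatrix R *ᵥ x) i = ∑ e ∈ S ×ˢ Sᶜ with G.Adj e.1 e.2, (x e.1 - x e.2) := by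
  simp only [lapMatrix_mulVec_apply_eq_sum_adj, ← sum_add_sum_compl S,
    sum_add_distrib, sum_sum_ite_adj_sub_eq_zero, zero_add, sum_filter,
    sum_product]

theorem IsBridge.exists_sum_lapMatrix_mulVec_eq {u v : V} (hb : G.IsBridge s(u, v))
    (huv : G.Adj u v) (x : V → R) :
    ∃ S : Finset V, ∑ i ∈ S, (G.lapMatrix R *ᵥ x) i = x u - x v := by
  set H := G.deleteEdges {s(u, v)}
  refine ⟨univ.filter (H.Reachable u), ?_⟩
  rw [sum_lapMatrix_mulVec_eq_sum_boundary]
  convert sum_singleton (fun e : V × V => x e.1 - x e.2) (u, v)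
  ext ⟨i, j⟩
  simp only [mem_filter, mem_product, mem_compl, mem_univ, true_and,
    mem_singleton, Prod.mk.injEq]
  constructor
  · rintro ⟨⟨hui, huj⟩, hij⟩
    by_cases he : s(i, j) = s(u, v)
    · rcases Sym2.eq_iff.1 he with ⟨rfl, rfl⟩ | ⟨rfl, rfl⟩
      · exact ⟨rfl, rfl⟩
      · exact absurd hui hb
    · exact absurd (hui.trans (deleteEdges_adj.2 ⟨hij, he⟩).reachable) huj
  · rintro ⟨rfl, rfl⟩
    exact ⟨⟨Reachable.refl _, hb⟩, huv⟩

theorem IsBridge.dvd_sub_of_smul_lapMatrix_mulVec_eq {R : Type*} [CommRing R] {p q : R}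
    (hpq : IsCoprime p q) {w : V → R}
    (heig : q • (G.lapMatrix R *ᵥ w) = p • (G.degMatrix R *ᵥ w))
    {u v : V} (hb : G.IsBridge s(u, v)) (huv : G.Adj u v) : p ∣ w u - w v := by
  obtain ⟨S, hS⟩ := hb.exists_sum_lapMatrix_mulVec_eq huv w
  have hmul : q * (w u - w v) = p * ∑ i ∈ S, (G.degMatrix R *ᵥ w) i := by
    simp only [← hS, mul_sum]
    exact sum_congr rfl fun i _ => congrFun heig i
  exact hpq.dvd_of_dvd_mul_left ⟨_, hmul⟩

end SimpleGraph

theorem tree_eigvec_entries_congruent_general {V : Type*} [Fintype V] [DecidableEq V]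
    (G : SimpleGraph V) [DecidableRel G.Adj]
    (hG : G.IsTree)
    (p q : ℤ) (hpq : IsCoprime p q)
    (w : V → ℤ)
    (heig : q • ((Matrix.diagonal (fun v => (G.degree v : ℤ)) - G.adjMatrix ℤ).mulVec w) =
            p • ((Matrix.diagonal (fun v => (G.degree v : ℤ))).mulVec w)) :
    ∀ u v : V, w u ≡ w v [ZMOD p] := by
  have hLD : q • (G.lapMatrix ℤ *ᵥ w) = p • (G.degMatrix ℤ *ᵥ w) := heig
  have hedge : ∀ u v, G.Adj u v → w u ≡ w v [ZMOD p] := fun u v huv =>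
    (Int.modEq_iff_dvd.2 <| SimpleGraph.IsBridge.dvd_sub_of_smul_lapMatrix_mulVec_eq hpq hLD
      (SimpleGraph.isAcyclic_iff_forall_adj_isBridge.1 hG.isAcyclic huv) huv).symm
  exact hG.connected.preconnected.modEq_of_forall_adj hedge

/-- in a tree, an integer vector with coprime entries satisfying
`q·(L w) = p·(D w)` has all its entries congruent modulo `p`. -/
theorem tree_eigvec_entries_congruent {V : Type*} [Fintype V] [DecidableEq V]
    (G : SimpleGraph V) [DecidableRel G.Adj]
    (hG : G.IsTree) (hcard : 2 ≤ Fintype.card V)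
    (p q : ℤ) (hp : 0 ≤ p) (hq : 1 ≤ q) (hpq : IsCoprime p q)
    (w : V → ℤ) (hw : Finset.univ.gcd w = 1)
    (heig : q • ((Matrix.diagonal (fun v => (G.degree v : ℤ)) - G.adjMatrix ℤ).mulVec w) =
            p • ((Matrix.diagonal (fun v => (G.degree v : ℤ))).mulVec w)) :
    ∀ u v : V, w u ≡ w v [ZMOD p] :=
  tree_eigvec_entries_congruent_general G hG p q hpq w heig
end

section
/- Let G be a connected finite simple graph with normalized Laplacian 𝓛, and let a and b be strongly cospectral vertices whose negative eigenvalue support S⁻ consists of a single eigenvalue θ. Then e_a − e_b is an eigenvector of 𝓛 for the eigenvalue θ, i.e., 𝓛 (e_a − e_b) = θ • (e_a − e_b). -/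
/-! Expand `e_a − e_b` in an orthonormal eigenbasis of `𝓛`: its coefficient on an eigenvector `u`
is `u a − u b`. By strong cospectrality this vanishes unless the eigenvalue of `u` lies in `S⁻`,
i.e. equals `θ`, so only `θ`-eigenvectors occur in the expansion. -/

open Matrix

theorem normLap_isHermitian {V : Type*} [Fintype V] [DecidableEq V]
    (G : SimpleGraph V) [DecidableRel G.Adj] : (normLap G).IsHermitian := by
  have h := isHermitian_conjTranspose_mul_mul (diagonal fun v => (Real.sqrt (G.degree v))⁻¹)
    ((isHermitian_diagonal fun v => (G.degree v : ℝ)).sub (G.isHermitian_adjMatrix ℝ))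
  rwa [diagonal_conjTranspose, star_trivial] at h

theorem Matrix.IsHermitian.mulVec_eq_smul_of_dotProduct_eq_zero {n : Type*} [Fintype n]
    [DecidableEq n] {A : Matrix n n ℝ} (hA : A.IsHermitian) {w : n → ℝ} {θ : ℝ}
    (h : ∀ (v : n → ℝ) (μ : ℝ), A *ᵥ v = μ • v → μ ≠ θ → v ⬝ᵥ w = 0) :
    A *ᵥ w = θ • w := by
  set u := hA.eigenvectorBasis
  have hu : ∀ i, A *ᵥ ⇑(u i) = hA.eigenvalues i • ⇑(u i) := hA.mulVec_eigenvectorBasis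
  have hw : ∑ i, (u i ⬝ᵥ w) • ⇑(u i) = w := by
    simpa [EuclideanSpace.inner_eq_star_dotProduct, dotProduct_comm] using
      congrArg WithLp.ofLp (u.sum_repr' (WithLp.toLp 2 w))
  have hterm : ∀ i, (u i ⬝ᵥ w) • (hA.eigenvalues i • ⇑(u i)) = θ • (u i ⬝ᵥ w) • ⇑(u i) := by
    intro i
    by_cases hi : hA.eigenvalues i = θ
    · rw [hi, smul_comm]
    · rw [h _ _ (hu i) hi, zero_smul, zero_smul, smul_zero]
  calc A *ᵥ w = ∑ i, (u i ⬝ᵥ w) • (hA.eigenvalues i • ⇑(u i)) := by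
        conv_lhs => rw [← hw]
        simp only [mulVec_sum, mulVec_smul, hu]
    _ = θ • w := by simp only [hterm, ← Finset.smul_sum, hw]

theorem StronglyCospectral.apply_eq_of_not_Sminus {V : Type*} [Fintype V] {L : Matrix V V ℝ}
    {a b : V} (hsc : StronglyCospectral L a b) {μ : ℝ} (hμ : ¬ Sminus L a b μ) {v : V → ℝ}
    (hv : L *ᵥ v = μ • v) : v a = v b := by
  rcases hsc μ with hplus | hminus
  · exact hplus v hv
  · have hab := hminus v hv
    by_cases hva : v a = 0
    · linarith
    · exact absurd ⟨⟨v, fun h0 => hva (congrFun h0 a), hv, hva⟩, hminus⟩ hμ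

theorem single_Sminus_gives_eigenvector_general {V : Type*} [Fintype V] [DecidableEq V]
    (G : SimpleGraph V) [DecidableRel G.Adj]
    (a b : V)
    (hsc : StronglyCospectral (normLap G) a b)
    (θ : ℝ)
    (huniq : ∀ θ' : ℝ, Sminus (normLap G) a b θ' → θ' = θ) :
    (normLap G).mulVec ((Pi.single a 1 : V → ℝ) - Pi.single b 1) =
      θ • ((Pi.single a 1 : V → ℝ) - Pi.single b 1) := by
  refine (normLap_isHermitian G).mulVec_eq_smul_of_dotProduct_eq_zero fun v μ hv hμ => ?_
  rw [dotProduct_sub, dotProduct_single_one, dotProduct_single_one,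
    hsc.apply_eq_of_not_Sminus (mt (huniq μ) hμ) hv, sub_self]

/-- if the negative eigenvalue support of strongly cospectral vertices
`a, b` is the single eigenvalue `θ`, then `e_a − e_b` is a `θ`-eigenvector of `𝓛`. -/
theorem single_Sminus_gives_eigenvector {V : Type*} [Fintype V] [DecidableEq V]
    (G : SimpleGraph V) [DecidableRel G.Adj]
    (hG : G.Connected) (a b : V)
    (hsc : StronglyCospectral (normLap G) a b)
    (θ : ℝ) (hmem : Sminus (normLap G) a b θ)
    (huniq : ∀ θ' : ℝ, Sminus (normLap G) a b θ' → θ' = θ) :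
    (normLap G).mulVec ((Pi.single a 1 : V → ℝ) - Pi.single b 1) =
      θ • ((Pi.single a 1 : V → ℝ) - Pi.single b 1) :=
  single_Sminus_gives_eigenvector_general G a b hsc θ huniq
end
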